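/- For any set T of antipodal pairs of odd cardinality, the product of X operators over the qubits in those pairs, Xop (⋃_{p ∈ T} p), commutes with every stabilizer generator of the X–I code Ξ(2m) and swaps the codewords |0̄⟩ and |1̄⟩; hence it is a logical X operator of Ξ(2m). -/

import Mathlib

open scoped BigOperators

/-- Bit strings on `2m` qubits. -/
abbrev Bits (m : ℕ) := Fin (2*m) → ZMod 2

/-- The `2m`-qubit Hilbert space, as functions from computational basis labels to `ℂ`. -/
abbrev QState (m : ℕ) := Bits m → ℂ

/-- Indicator bit string of a finite set of qubits. -/
def indSet (m : ℕ) (S : Finset (Fin (2*m))) : Bits m := fun i => if i ∈ S then 1 else 0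

/-- The Pauli-X operator on the set `S`: sends `|x⟩` to `|x + 1_S⟩`. -/
def Xop (m : ℕ) (S : Finset (Fin (2*m))) : QState m →ₗ[ℂ] QState m where
  toFun v := fun x => v (x + indSet m S)
  map_add' _ _ := rfl
  map_smul' _ _ := rfl

/-- The Pauli-Z operator on the set `S`: sends `|x⟩` to `(-1)^{∑_{i∈S} x i} |x⟩`. -/
def Zop (m : ℕ) (S : Finset (Fin (2*m))) : QState m →ₗ[ℂ] QState m where
  toFun v := fun x => ((-1 : ℂ) ^ (∑ i ∈ S, (x i).val)) * v x
  map_add' u v := by funext x; simp [mul_add]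
  map_smul' c v := by funext x; simp; ring

/-- The antipodal involution `τ i = i + m (mod 2m)`. -/
def tau (m : ℕ) (i : Fin (2*m)) : Fin (2*m) :=
  ⟨(i.val + m) % (2*m), Nat.mod_lt _ (by have := i.isLt; omega)⟩

/-- The computational basis state `|x⟩`. -/
def ket (m : ℕ) (x : Bits m) : QState m := fun y => if y = x then 1 else 0

/-- The pair-equal bit string determined by `b : Fin m → ZMod 2`. -/
def xb (m : ℕ) (b : Fin m → ZMod 2) : Bits m :=
  fun i => b ⟨i.val % m, Nat.mod_lt _ (by have := i.isLt; omega)⟩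

/-- The logical codeword `|0̄⟩` of the X–I code `Ξ(2m)`. -/
noncomputable def ket0 (m : ℕ) : QState m :=
  ((Real.sqrt (2 ^ (m-1)) : ℂ))⁻¹ •
    ∑ b ∈ Finset.univ.filter (fun b : Fin m → ZMod 2 => ∑ i, b i = 0), ket m (xb m b)

/-- The logical codeword `|1̄⟩` of the X–I code `Ξ(2m)`. -/
noncomputable def ket1 (m : ℕ) : QState m :=
  ((Real.sqrt (2 ^ (m-1)) : ℂ))⁻¹ •
    ∑ b ∈ Finset.univ.filter (fun b : Fin m → ZMod 2 => ∑ i, b i = 1), ket m (xb m b)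

/-!
The set `U` of flipped qubits is a union of antipodal pairs, so its indicator is the pair-equal
string `x_c`, where `c : Fin m → ZMod 2` marks the pairs of `T`; hence `∑ c = |T| = 1` in
`ZMod 2`. Flipping `U` sends `|x_b⟩` to `|x_{b+c}⟩`, which changes the parity of `b` and so swaps
`|0̄⟩` and `|1̄⟩`. All X operators commute, and since `U` meets every pair `{j, τ j}` in `0` or `2`
qubits, flipping `U` does not change the eigenvalue of `Z_{j} Z_{τ j}`.
-/

open scoped Finset

section Antipodal

variable {m : ℕ}

lemma tau_val (i : Fin (2*m)) :
    (tau m i).val = if i.val < m then i.val + m else i.val - m := by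
  have hi := i.isLt
  simp only [tau]
  split_ifs with h
  · exact Nat.mod_eq_of_lt (by omega)
  · rw [Nat.mod_eq_sub_mod (by omega), Nat.mod_eq_of_lt (by omega)]
    omega

lemma tau_tau (i : Fin (2*m)) : tau m (tau m i) = i := by
  have hi := i.isLt
  ext
  rw [tau_val, tau_val]
  split_ifs <;> omega

lemma tau_ne (i : Fin (2*m)) : tau m i ≠ i := by
  intro h
  have hi := i.isLt
  have hval := congrArg Fin.val h
  rw [tau_val] at hval
  split_ifs at hval <;> omega

def pairIndex (i : Fin (2*m)) : Fin m :=
  ⟨i.val % m, Nat.mod_lt _ (by have := i.isLt; omega)⟩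

def pairRep (k : Fin m) : Fin (2*m) := Fin.castLE (by omega) k

lemma pairRep_pairIndex (i : Fin (2*m)) :
    pairRep (pairIndex i) = i ∨ pairRep (pairIndex i) = tau m i := by
  have hi := i.isLt
  by_cases h : i.val < m
  · left; ext; simp [pairRep, pairIndex, Nat.mod_eq_of_lt h]
  · right; ext
    simp only [pairRep, pairIndex, Fin.val_castLE, tau_val, if_neg h]
    rw [Nat.mod_eq_sub_mod (by omega), Nat.mod_eq_of_lt (by omega)]

lemma tau_pairRep_ne_pairRep (k k' : Fin m) : tau m (pairRep k) ≠ pairRep k' := by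
  intro h
  have hval := congrArg Fin.val h
  simp only [pairRep, Fin.val_castLE, tau_val, if_pos k.isLt] at hval
  omega

lemma pairRep_injective : Function.Injective (pairRep (m := m)) :=
  Fin.castLE_injective (by omega)

lemma xb_apply (b : Fin m → ZMod 2) (i : Fin (2*m)) : xb m b i = b (pairIndex i) := rfl

lemma xb_add (b c : Fin m → ZMod 2) : xb m (b + c) = xb m b + xb m c := rfl

lemma xb_comp_pairRep {x : Bits m} (hx : ∀ i, x (tau m i) = x i) : xb m (x ∘ pairRep) = x := by
  funext i
  rcases pairRep_pairIndex i with h | h <;> simp [xb_apply, h, hx]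

end Antipodal

section Operators

variable {m : ℕ}

lemma Xop_apply (S : Finset (Fin (2*m))) (v : QState m) (x : Bits m) :
    Xop m S v x = v (x + indSet m S) := rfl

lemma Zop_apply (S : Finset (Fin (2*m))) (v : QState m) (x : Bits m) :
    Zop m S v x = (-1 : ℂ) ^ (∑ i ∈ S, (x i).val) * v x := rfl

lemma Xop_comp_Xop_comm (S S' : Finset (Fin (2*m))) :
    (Xop m S).comp (Xop m S') = (Xop m S').comp (Xop m S) := by
  ext v x
  simp only [LinearMap.comp_apply, Xop_apply, add_right_comm]

lemma Xop_ket (S : Finset (Fin (2*m))) (x : Bits m) :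
    Xop m S (ket m x) = ket m (x + indSet m S) := by
  funext y
  simp only [Xop_apply, ket, ← ZModModule.sub_eq_add, sub_eq_iff_eq_add]

lemma neg_one_pow_val_add (a b : ZMod 2) :
    (-1 : ℂ) ^ (a + b).val = (-1) ^ a.val * (-1) ^ b.val := by
  rw [ZMod.val_add, ← neg_one_pow_eq_pow_mod_two, pow_add]

lemma sum_val_indSet (S U : Finset (Fin (2*m))) :
    ∑ i ∈ S, (indSet m U i).val = #(S ∩ U) := by
  simp [indSet, apply_ite ZMod.val, ZMod.val_one]

/-- Flipping the bits in `U` changes the `Z_S`-eigenvalue by `(-1) ^ #(S ∩ U)`. -/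
lemma Xop_comp_Zop_comm {S U : Finset (Fin (2*m))} (h : Even #(S ∩ U)) :
    (Xop m U).comp (Zop m S) = (Zop m S).comp (Xop m U) := by
  ext v x
  simp only [LinearMap.comp_apply, Xop_apply, Zop_apply, Pi.add_apply,
    ← Finset.prod_pow_eq_pow_sum, neg_one_pow_val_add, Finset.prod_mul_distrib]
  rw [Finset.prod_pow_eq_pow_sum (s := S) (fun i => (indSet m U i).val), sum_val_indSet,
    h.neg_one_pow, mul_one]

end Operators

section AntipodalSets

variable {m : ℕ}

lemma tau_mem_iff {S : Finset (Fin (2*m))} (hS : ∀ i ∈ S, tau m i ∈ S) (i : Fin (2*m)) :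
    tau m i ∈ S ↔ i ∈ S :=
  ⟨fun h => tau_tau i ▸ hS _ h, hS i⟩

lemma indSet_tau {S : Finset (Fin (2*m))} (hS : ∀ i ∈ S, tau m i ∈ S) (i : Fin (2*m)) :
    indSet m S (tau m i) = indSet m S i := by
  simp only [indSet, tau_mem_iff hS]

lemma even_card_pair_inter {S : Finset (Fin (2*m))} (hS : ∀ i ∈ S, tau m i ∈ S)
    (j : Fin (2*m)) : Even #({j, tau m j} ∩ S) := by
  by_cases hj : j ∈ S
  · rw [Finset.inter_eq_left.mpr (by simp [Finset.insert_subset_iff, hj, hS j hj]),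
      Finset.card_pair (tau_ne j).symm]
    exact even_two
  · rw [Finset.disjoint_iff_inter_eq_empty.mp (by simp [hj, tau_mem_iff hS])]
    exact Even.zero

lemma tau_mem_biUnion_of_mem {T : Finset (Finset (Fin (2*m)))}
    (hT : ∀ p ∈ T, ∃ i, p = {i, tau m i}) : ∀ i ∈ T.biUnion id, tau m i ∈ T.biUnion id := by
  simp only [Finset.mem_biUnion, id]
  rintro i ⟨p, hp, hip⟩
  obtain ⟨j, rfl⟩ := hT p hp
  refine ⟨_, hp, ?_⟩
  rw [Finset.mem_insert, Finset.mem_singleton] at hip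
  rcases hip with rfl | rfl <;> simp [tau_tau]

/-- Each pair of `T` has exactly one element in the lower half. -/
lemma card_filter_pairRep_mem_biUnion {T : Finset (Finset (Fin (2*m)))}
    (hT : ∀ p ∈ T, ∃ i, p = {i, tau m i}) :
    #(Finset.univ.filter fun k : Fin m => pairRep k ∈ T.biUnion id) = #T := by
  refine Finset.card_bij (fun k _ => {pairRep k, tau m (pairRep k)}) ?_ ?_ ?_
  · intro k hk
    obtain ⟨p, hp, hkp⟩ := Finset.mem_biUnion.mp (Finset.mem_filter.mp hk).2
    obtain ⟨j, rfl⟩ := hT p hp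
    rw [id, Finset.mem_insert, Finset.mem_singleton] at hkp
    rcases hkp with h | h
    · rwa [h]
    · rwa [h, tau_tau, Finset.pair_comm]
  · intro k _ k' _ h
    have hk : pairRep k ∈ ({pairRep k', tau m (pairRep k')} : Finset _) :=
      h ▸ Finset.mem_insert_self _ _
    rw [Finset.mem_insert, Finset.mem_singleton] at hk
    rcases hk with h' | h'
    · exact pairRep_injective h'
    · exact absurd h'.symm (tau_pairRep_ne_pairRep k' k)
  · intro p hp
    obtain ⟨j, rfl⟩ := hT p hp
    have hj : j ∈ T.biUnion id := Finset.mem_biUnion.mpr ⟨_, hp, Finset.mem_insert_self _ _⟩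
    refine ⟨pairIndex j, ?_, ?_⟩ <;> rcases pairRep_pairIndex j with h | h
    · simpa [h] using hj
    · simpa [h] using tau_mem_biUnion_of_mem hT j hj
    · rw [h]
    · rw [h, tau_tau, Finset.pair_comm]

end AntipodalSets

/-- Reindex by `b ↦ b + c`. -/
lemma Xop_sum_ket_xb {m : ℕ} {S : Finset (Fin (2*m))} {c : Fin m → ZMod 2}
    (hc : indSet m S = xb m c) (A : ZMod 2) :
    Xop m S (∑ b ∈ Finset.univ.filter (fun b : Fin m → ZMod 2 => ∑ i, b i = A), ket m (xb m b)) =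
      ∑ b ∈ Finset.univ.filter (fun b : Fin m → ZMod 2 => ∑ i, b i = A + ∑ i, c i),
        ket m (xb m b) := by
  rw [map_sum]
  refine Finset.sum_equiv (Equiv.addRight c) (fun b => ?_) (fun b _ => ?_)
  · simp [Finset.sum_add_distrib]
  · rw [Xop_ket, hc, ← xb_add, Equiv.coe_addRight]

theorem XI_logical_X_odd_pairs_general (m : ℕ)
    (T : Finset (Finset (Fin (2*m))))
    (hT : ∀ p ∈ T, ∃ i : Fin (2*m), p = {i, tau m i})
    (hodd : Odd T.card) :
    (∀ j : Fin (2*m),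
        (Xop m (T.biUnion id)).comp (Zop m {j, tau m j}) =
          (Zop m {j, tau m j}).comp (Xop m (T.biUnion id))) ∧
    (∀ j k : Fin (2*m), ({j, tau m j} : Finset (Fin (2*m))) ≠ {k, tau m k} →
        (Xop m (T.biUnion id)).comp (Xop m {j, tau m j, k, tau m k}) =
          (Xop m {j, tau m j, k, tau m k}).comp (Xop m (T.biUnion id))) ∧
    Xop m (T.biUnion id) (ket0 m) = ket1 m ∧
    Xop m (T.biUnion id) (ket1 m) = ket0 m := by
  have hU := tau_mem_biUnion_of_mem hT
  set c : Fin m → ZMod 2 := indSet m (T.biUnion id) ∘ pairRep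
  have hc : indSet m (T.biUnion id) = xb m c := (xb_comp_pairRep (indSet_tau hU)).symm
  have hsum : ∑ k, c k = 1 := by
    simp only [c, Function.comp_apply, indSet, Finset.sum_boole,
      card_filter_pairRep_mem_biUnion hT, hodd.natCast_zmod_two]
  refine ⟨fun j => Xop_comp_Zop_comm (even_card_pair_inter hU j),
    fun j k _ => Xop_comp_Xop_comm _ _, ?_, ?_⟩
  · rw [ket0, ket1, map_smul, Xop_sum_ket_xb hc, hsum, zero_add]
  · rw [ket0, ket1, map_smul, Xop_sum_ket_xb hc, hsum, ZModModule.add_self]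

/-- For any set `T` of antipodal pairs of odd cardinality, the product of X operators
over the qubits in those pairs commutes with every stabilizer generator of the X–I
code `Ξ(2m)` and swaps the codewords `|0̄⟩` and `|1̄⟩`; hence it is a logical X
operator of `Ξ(2m)`. -/
theorem XI_logical_X_odd_pairs (m : ℕ) (hm : 2 ≤ m)
    (T : Finset (Finset (Fin (2*m))))
    (hT : ∀ p ∈ T, ∃ i : Fin (2*m), p = {i, tau m i})
    (hodd : Odd T.card) :
    (∀ j : Fin (2*m),
        (Xop m (T.biUnion id)).comp (Zop m {j, tau m j}) =
          (Zop m {j, tau m j}).comp (Xop m (T.biUnion id))) ∧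
    (∀ j k : Fin (2*m), ({j, tau m j} : Finset (Fin (2*m))) ≠ {k, tau m k} →
        (Xop m (T.biUnion id)).comp (Xop m {j, tau m j, k, tau m k}) =
          (Xop m {j, tau m j, k, tau m k}).comp (Xop m (T.biUnion id))) ∧
    Xop m (T.biUnion id) (ket0 m) = ket1 m ∧
    Xop m (T.biUnion id) (ket1 m) = ket0 m :=
  XI_logical_X_odd_pairs_general m T hT hodd
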